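/- Let g : [0,∞) → [0,∞) be nonincreasing and bounded, and let c > 0, 0 < β < 1, and s ≥ 0. If the series Σ_{m=1}^∞ g(m) · m^{(s+1)/β − 1} converges, then the series Σ_{m=1}^∞ g(c·m^β) · m^s also converges. -/

import Mathlib

/-!
Group the indices `k` by `n = ⌊c k^β⌋`. The fibre of `n` lies in the interval
`[(n/c)^{1/β}, ((n+1)/c)^{1/β})`, whose length is `O((n+1)^{1/β - 1})` by Bernoulli's inequality
for the exponent `1/β ≥ 1`, and on it `g (c k^β) k^s ≤ g n · O((n+1)^{s/β})` by monotonicity.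
So the fibre sums are `O(g n (n+1)^{(s+1)/β - 1})`, which are summable by hypothesis.
-/

open Finset

theorem summable_of_sum_fiber_le {ι κ : Type*} [DecidableEq κ] {a : ι → ℝ} {b : κ → ℝ}
    (ha : 0 ≤ a) (hb : Summable b) (φ : ι → κ)
    (hfiber : ∀ (n : κ) (u : Finset ι), ∑ m ∈ u with φ m = n, a m ≤ b n) : Summable a := by
  have hb0 : 0 ≤ b := fun n => by simpa using hfiber n ∅
  refine summable_of_sum_le ha (c := ∑' n, b n) fun u => ?_
  rw [← sum_fiberwise_of_maps_to fun m hm => mem_image_of_mem φ hm]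
  exact (sum_le_sum fun n _ => hfiber n u).trans (hb.sum_le_tsum _ fun n _ => hb0 n)

theorem natCast_card_le_sub_add_one {u : Finset ℕ} {x y : ℝ} (hx : 0 ≤ x) (hxy : x ≤ y)
    (hu : ∀ k ∈ u, x ≤ k ∧ (k : ℝ) < y) : (#u : ℝ) ≤ y - x + 1 := by
  have hsub : u ⊆ Ico ⌈x⌉₊ ⌈y⌉₊ := fun k hk => by
    obtain ⟨hxk, hky⟩ := hu k hk
    exact mem_Ico.2 ⟨Nat.ceil_le.2 hxk, Nat.lt_ceil.2 hky⟩
  have hcard : (#u : ℝ) ≤ (⌈y⌉₊ : ℝ) - ⌈x⌉₊ := by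
    have := card_le_card hsub
    rw [Nat.card_Ico] at this
    rw [← Nat.cast_sub (Nat.ceil_mono hxy)]
    exact_mod_cast this
  linarith [Nat.ceil_lt_add_one (hx.trans hxy), Nat.le_ceil x]

theorem rpow_sub_rpow_le_mul {x y q : ℝ} (hx : 0 ≤ x) (hxy : x ≤ y) (hq : 1 ≤ q) :
    y ^ q - x ^ q ≤ q * y ^ (q - 1) * (y - x) := by
  rcases hxy.eq_or_lt with rfl | hlt
  · simp
  have hy : 0 < y := hx.trans_lt hlt
  have bernoulli : 1 + q * (x / y - 1) ≤ (x / y) ^ q := by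
    simpa using
      one_add_mul_self_le_rpow_one_add (s := x / y - 1) (by linarith [div_nonneg hx hy.le]) hq
  rw [Real.div_rpow hx hy.le, le_div_iff₀ (by positivity)] at bernoulli
  have hyq : y ^ q = y ^ (q - 1) * y := by rw [← Real.rpow_add_one hy.ne']; ring_nf
  rw [hyq] at bernoulli ⊢
  have : (1 + q * (x / y - 1)) * (y ^ (q - 1) * y) =
      y ^ (q - 1) * y + q * y ^ (q - 1) * (x - y) := by
    field_simp
  linarith

theorem summable_mul_add_one_rpow {f : ℝ → ℝ} (hf : ∀ n : ℕ, 0 ≤ f n) {p : ℝ} (hp : 0 ≤ p)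
    (h : Summable fun n : ℕ => f ((n : ℝ) + 1) * ((n : ℝ) + 1) ^ p) :
    Summable fun n : ℕ => f n * ((n : ℝ) + 1) ^ p := by
  refine (summable_nat_add_iff 1).1 <|
    (h.mul_left (2 ^ p)).of_nonneg_of_le (fun n => ?_) fun n => ?_
  · exact mul_nonneg (hf _) (by positivity)
  · have hfn : 0 ≤ f ((n : ℝ) + 1) := by exact_mod_cast hf (n + 1)
    push_cast
    calc f ((n : ℝ) + 1) * ((n : ℝ) + 1 + 1) ^ p
        ≤ f ((n : ℝ) + 1) * (2 * ((n : ℝ) + 1)) ^ p := by gcongr; linarith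
      _ = 2 ^ p * (f ((n : ℝ) + 1) * ((n : ℝ) + 1) ^ p) := by
          rw [Real.mul_rpow zero_le_two (by positivity)]; ring

section Snowflake

variable {c β : ℝ} (hc : 0 < c) (hβ : 0 < β)
include hc hβ

theorem rpow_inv_le_and_lt_of_floor_mul_rpow_eq {t : ℝ} (ht : 0 ≤ t) {n : ℕ}
    (h : ⌊c * t ^ β⌋₊ = n) : (n / c) ^ β⁻¹ ≤ t ∧ t < ((n + 1) / c) ^ β⁻¹ := by
  have hct : 0 ≤ c * t ^ β := by positivity
  constructor
  · rw [Real.rpow_inv_le_iff_of_pos (by positivity) ht hβ, div_le_iff₀' hc, ← h]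
    exact Nat.floor_le hct
  · rw [Real.lt_rpow_inv_iff_of_pos ht (by positivity) hβ, lt_div_iff₀' hc, ← h]
    exact Nat.lt_floor_add_one _

theorem card_filter_floor_mul_rpow_eq_le (hβ1 : β ≤ 1) (u : Finset ℕ) (n : ℕ) :
    (#{k ∈ u | ⌊c * ((k : ℕ) : ℝ) ^ β⌋₊ = n} : ℝ) ≤
      (β⁻¹ / c ^ β⁻¹ + 1) * ((n : ℝ) + 1) ^ (β⁻¹ - 1) := by
  set q := β⁻¹
  have hq : 1 ≤ q := one_le_inv₀ hβ |>.2 hβ1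
  have hxy : (n / c) ^ q ≤ ((n + 1) / c) ^ q := by gcongr; linarith
  have hcount := natCast_card_le_sub_add_one (u := {k ∈ u | ⌊c * (k : ℝ) ^ β⌋₊ = n})
    (by positivity) hxy fun k hk =>
      rpow_inv_le_and_lt_of_floor_mul_rpow_eq hc hβ k.cast_nonneg (mem_filter.1 hk).2
  have hgap : ((n + 1) / c) ^ q - (n / c) ^ q ≤ q / c ^ q * ((n : ℝ) + 1) ^ (q - 1) := by
    refine (rpow_sub_rpow_le_mul (by positivity) (by gcongr; linarith) hq).trans_eq ?_
    rw [Real.div_rpow (by positivity) hc.le, Real.rpow_sub_one hc.ne']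
    field_simp
    ring
  have hone : 1 ≤ ((n : ℝ) + 1) ^ (q - 1) :=
    Real.one_le_rpow (by linarith [n.cast_nonneg (α := ℝ)]) (by linarith)
  rw [add_one_mul]
  linarith

theorem exists_sum_filter_floor_mul_rpow_le {g : ℝ → ℝ} (hg0 : ∀ x, 0 ≤ x → 0 ≤ g x)
    (hg : AntitoneOn g (Set.Ici 0)) (hβ1 : β ≤ 1) {s : ℝ} (hs : 0 ≤ s) :
    ∃ C, ∀ (n : ℕ) (u : Finset ℕ), ∑ k ∈ u with ⌊c * ((k : ℕ) : ℝ) ^ β⌋₊ = n,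
      g (c * (k : ℝ) ^ β) * (k : ℝ) ^ s ≤ C * (g n * ((n : ℝ) + 1) ^ ((s + 1) / β - 1)) := by
  refine ⟨(β⁻¹ / c ^ β⁻¹ + 1) / c ^ (β⁻¹ * s), fun n u => ?_⟩
  set q := β⁻¹
  have hn : (0 : ℝ) < n + 1 := by positivity
  have hterm : ∀ k : ℕ, ⌊c * (k : ℝ) ^ β⌋₊ = n →
      g (c * (k : ℝ) ^ β) * (k : ℝ) ^ s ≤ g n * ((n + 1) / c) ^ (q * s) := fun k hfloor => by
    have hck : (n : ℝ) ≤ c * (k : ℝ) ^ β := hfloor ▸ Nat.floor_le (by positivity)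
    have hk_lt := (rpow_inv_le_and_lt_of_floor_mul_rpow_eq hc hβ k.cast_nonneg hfloor).2
    rw [Real.rpow_mul (by positivity)]
    have hg_le : g (c * (k : ℝ) ^ β) ≤ g n :=
      hg (Set.mem_Ici.2 n.cast_nonneg) (Set.mem_Ici.2 (n.cast_nonneg.trans hck)) hck
    exact mul_le_mul hg_le (by gcongr) (by positivity) (hg0 _ n.cast_nonneg)
  calc ∑ k ∈ u with ⌊c * ((k : ℕ) : ℝ) ^ β⌋₊ = n, g (c * (k : ℝ) ^ β) * (k : ℝ) ^ s
      ≤ #{k ∈ u | ⌊c * ((k : ℕ) : ℝ) ^ β⌋₊ = n} * (g n * ((n + 1) / c) ^ (q * s)) := by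
        simpa using sum_le_card_nsmul _ _ _ fun k hk => hterm k (mem_filter.1 hk).2
    _ ≤ (q / c ^ q + 1) * ((n : ℝ) + 1) ^ (q - 1) * (g n * ((n + 1) / c) ^ (q * s)) := by
        have := hg0 n n.cast_nonneg
        gcongr
        exact card_filter_floor_mul_rpow_eq_le hc hβ hβ1 u n
    _ = (q / c ^ q + 1) / c ^ (q * s) * (g n * ((n : ℝ) + 1) ^ ((s + 1) / β - 1)) := by
        have hexp : (s + 1) / β - 1 = (q - 1) + q * s := by ring
        rw [Real.div_rpow hn.le hc.le, hexp, Real.rpow_add hn]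
        ring

end Snowflake

theorem summable_snowflake_change_of_variables_general
    (g : ℝ → ℝ) (hg0 : ∀ x : ℝ, 0 ≤ x → 0 ≤ g x)
    (hmono : ∀ x y : ℝ, 0 ≤ x → x ≤ y → g y ≤ g x)
    (c β s : ℝ) (hc : 0 < c) (hβ0 : 0 < β) (hβ1 : β < 1) (hs : 0 ≤ s)
    (hsum : Summable (fun m : ℕ => g ((m : ℝ) + 1) * ((m : ℝ) + 1) ^ ((s + 1) / β - 1))) :
    Summable (fun m : ℕ => g (c * ((m : ℝ) + 1) ^ β) * ((m : ℝ) + 1) ^ s) := by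
  have hanti : AntitoneOn g (Set.Ici 0) := fun x hx _ _ hxy => hmono x _ hx hxy
  have hp : 0 ≤ (s + 1) / β - 1 := by rw [sub_nonneg, le_div_iff₀ hβ0]; linarith
  have hb := summable_mul_add_one_rpow (fun n => hg0 n n.cast_nonneg) hp hsum
  obtain ⟨C, hfiber⟩ := exists_sum_filter_floor_mul_rpow_le hc hβ0 hg0 hanti hβ1.le hs
  have hsnow : Summable fun k : ℕ => g (c * (k : ℝ) ^ β) * (k : ℝ) ^ s :=
    summable_of_sum_fiber_le (fun k => mul_nonneg (hg0 _ (by positivity)) (by positivity))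
      (hb.mul_left C) (fun k : ℕ => ⌊c * (k : ℝ) ^ β⌋₊) hfiber
  simpa using (summable_nat_add_iff 1).2 hsnow

/-- **Theorem (summability along a snowflaked scale).**
Let `g : [0,∞) → [0,∞)` be nonincreasing and bounded, `c > 0`, `0 < β < 1`, `s ≥ 0`.
If `Σ_{m≥1} g(m) m^{(s+1)/β − 1}` converges, then `Σ_{m≥1} g(c m^β) m^s` converges. -/
theorem summable_snowflake_change_of_variables
    (g : ℝ → ℝ) (hg0 : ∀ x : ℝ, 0 ≤ x → 0 ≤ g x)
    (hmono : ∀ x y : ℝ, 0 ≤ x → x ≤ y → g y ≤ g x)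
    (hbdd : ∃ K : ℝ, ∀ x : ℝ, 0 ≤ x → g x ≤ K)
    (c β s : ℝ) (hc : 0 < c) (hβ0 : 0 < β) (hβ1 : β < 1) (hs : 0 ≤ s)
    (hsum : Summable (fun m : ℕ => g ((m : ℝ) + 1) * ((m : ℝ) + 1) ^ ((s + 1) / β - 1))) :
    Summable (fun m : ℕ => g (c * ((m : ℝ) + 1) ^ β) * ((m : ℝ) + 1) ^ s) :=
  summable_snowflake_change_of_variables_general g hg0 hmono c β s hc hβ0 hβ1 hs hsum
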